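/- arXiv:math/0406591 — 2 statements merged into one kernel-verified Lean document; each statement's English description precedes it below -/
import Mathlib

section
/- For all integers m ≥ 2 and h ≥ 0, the inequality dlow(−1, h+1, m) ≤ dhigh(1, h, m) + 1 holds if and only if h ≥ ⌈(m² − 1)/(3m + 4)⌉. -/
/-- `dlow(γ, h, m) = ⌈(C(m,2) + C(γ+1,2) + (2h+1)·C(m+1,2) − mγ − 1)/(m+1−γ)⌉`. -/
noncomputable def dlow (γ h m : ℤ) : ℤ :=
  ⌈((m.toNat.choose 2 : ℚ) + ((γ + 1).toNat.choose 2 : ℚ) +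
      (2 * h + 1) * ((m.toNat + 1).choose 2 : ℚ) - m * γ - 1) / (m + 1 - γ)⌉

/-- `dhigh(γ, h, m) = m + h + mh + γh − 1`. -/
def dhigh (γ h m : ℤ) : ℤ := m + h + m * h + γ * h - 1

theorem interval_overlap_iff (m h : ℤ) (hm : 2 ≤ m) (hh : 0 ≤ h) :
    dlow (-1) (h + 1) m ≤ dhigh 1 h m + 1 ↔ h ≥ ⌈((m : ℚ) ^ 2 - 1) / (3 * m + 4)⌉ := by
  have hmq : (2:ℚ) ≤ (m:ℚ) := by exact_mod_cast hm
  have hhq : (0:ℚ) ≤ (h:ℚ) := by exact_mod_cast hh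
  have hmn : ((m.toNat : ℚ)) = (m:ℚ) := by
    have := Int.toNat_of_nonneg (by linarith : (0:ℤ) ≤ m)
    exact_mod_cast congrArg (fun x : ℤ => (x : ℚ)) this
  have h0 : ((-1 : ℤ) + 1).toNat = 0 := rfl
  have e1 : ((m.toNat.choose 2 : ℚ)) = (m:ℚ) * ((m:ℚ) - 1) / 2 := by
    rw [Nat.cast_choose_two, hmn]
  have e2 : (((m.toNat + 1).choose 2 : ℚ)) = ((m:ℚ) + 1) * (m:ℚ) / 2 := by
    rw [Nat.cast_choose_two]
    push_cast [hmn]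
    ring
  rw [dlow, dhigh, h0, ge_iff_le, Int.ceil_le, Int.ceil_le, e1, e2]
  have hd1 : (0:ℚ) < (m:ℚ) + 1 - (-1 : ℤ) := by push_cast; linarith
  have hd2 : (0:ℚ) < 3 * (m:ℚ) + 4 := by linarith
  rw [div_le_iff₀ hd1, div_le_iff₀ hd2]
  push_cast [show Nat.choose 0 2 = 0 from rfl]
  constructor <;> intro h' <;> nlinarith [h']
end

section
/- There exist points p, q_1, …, q_5 ∈ ℂ² such that the only polynomial f ∈ ℂ[x,y] of total degree at most 5 that vanishes to order at least 3 at p and to order at least 2 at each q_i is the zero polynomial. (The linear system L_5(3, 2^5) of quintics with one triple point and five double points is empty and non-special; note C(7,2) = C(4,2) + 5·C(3,2) = 21.) -/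
open MvPolynomial

/-- The ideal of polynomials in `ℂ[x,y]` vanishing at the point `p ∈ ℂ²`;
`f` vanishes to order at least `m` at `p` iff `f ∈ (ptIdeal p) ^ m`. -/
noncomputable def ptIdeal (p : ℂ × ℂ) : Ideal (MvPolynomial (Fin 2) ℂ) :=
  Ideal.span {X 0 - C p.1, X 1 - C p.2}

/-- Any partial derivative of an element of `I ^ (m+1)` lies in `I ^ m`. -/
lemma pderiv_mem_pow {I : Ideal (MvPolynomial (Fin 2) ℂ)} :
    ∀ (m : ℕ) (f : MvPolynomial (Fin 2) ℂ), f ∈ I ^ (m + 1) → ∀ i, pderiv i f ∈ I ^ m := by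
  intro m
  induction m with
  | zero => intro f _ i; simp
  | succ m ih =>
    intro f hf i
    rw [pow_succ'] at hf
    refine Submodule.mul_induction_on hf ?_ ?_
    · intro a ha b hb
      rw [pderiv_mul]
      refine add_mem (Ideal.mul_mem_left _ _ hb) ?_
      rw [pow_succ']
      exact Ideal.mul_mem_mul ha (ih b hb i)
    · intro x y hx hy
      rw [map_add]; exact add_mem hx hy

lemma eval_zero_of_mem (p : ℂ × ℂ) (f : MvPolynomial (Fin 2) ℂ) (hf : f ∈ ptIdeal p) :
    eval (fun i => if i = 0 then p.1 else p.2) f = 0 := by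
  have h : ptIdeal p ≤ RingHom.ker (eval (fun i : Fin 2 => if i = 0 then p.1 else p.2)) := by
    rw [ptIdeal, Ideal.span_le]
    rintro g (rfl | rfl) <;> simp [RingHom.mem_ker]
  exact h hf

noncomputable def fsm (a b : ℕ) : Fin 2 →₀ ℕ := Finsupp.single 0 a + Finsupp.single 1 b

lemma fsm_inj {a b c d : ℕ} : fsm a b = fsm c d ↔ a = c ∧ b = d := by
  constructor
  · intro h
    constructor
    · have := DFunLike.congr_fun h 0; simpa [fsm] using this
    · have := DFunLike.congr_fun h 1; simpa [fsm] using this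
  · rintro ⟨rfl, rfl⟩; rfl

lemma eq_fsm (d : Fin 2 →₀ ℕ) : d = fsm (d 0) (d 1) := by
  ext i
  fin_cases i
  · simp [fsm]
  · simp [fsm]

lemma pderiv_pow' {i : Fin 2} {f : MvPolynomial (Fin 2) ℂ} {n : ℕ} :
    pderiv i (f ^ n) = C (n : ℂ) * f ^ (n - 1) * pderiv i f := by
  rw [pderiv_pow]
  norm_cast

lemma monomial_fsm (c : ℂ) (a b : ℕ) : monomial (fsm a b) c = C c * X 0 ^ a * X 1 ^ b := by
  rw [X_pow_eq_monomial, X_pow_eq_monomial, C_apply, fsm, monomial_mul, monomial_mul]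
  simp

def T5 : Finset (ℕ × ℕ) := (Finset.range 6 ×ˢ Finset.range 6).filter (fun p => p.1 + p.2 ≤ 5)

lemma expand (f : MvPolynomial (Fin 2) ℂ) (h : f.totalDegree ≤ 5) :
    f = ∑ p ∈ T5, monomial (fsm p.1 p.2) (coeff (fsm p.1 p.2) f) := by
  have hsub : f.support ⊆ T5.image (fun p => fsm p.1 p.2) := by
    intro d hd
    have hle : d 0 + d 1 ≤ 5 := by
      have h1 := MvPolynomial.le_totalDegree hd
      have h2 : (d.sum fun _ e => e) = d 0 + d 1 := by
        rw [Finsupp.sum_fintype _ _ (fun _ => rfl), Fin.sum_univ_two]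
      omega
    rw [Finset.mem_image]
    exact ⟨(d 0, d 1), by simp [T5]; omega, (eq_fsm d).symm⟩
  have h1 : f = ∑ d ∈ T5.image (fun p => fsm p.1 p.2), monomial d (coeff d f) := by
    conv_lhs => rw [MvPolynomial.as_sum f]
    exact Finset.sum_subset hsub (fun d _ hd => by
      have h0 : coeff d f = 0 := MvPolynomial.notMem_support_iff.mp (by simpa using hd)
      rw [h0, map_zero])
  rw [Finset.sum_image (fun p hp q hq h => by
      have := fsm_inj.mp h; exact Prod.ext this.1 this.2)] at h1
  exact h1

lemma cc2 : constantCoeff (2 : MvPolynomial (Fin 2) ℂ) = 2 := by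
  rw [show (2 : MvPolynomial (Fin 2) ℂ) = C 2 from (map_ofNat C 2).symm, constantCoeff_C]

set_option maxHeartbeats 1000000 in
theorem L5_3_2p5_empty :
    ∃ (p : ℂ × ℂ) (q : Fin 5 → ℂ × ℂ),
      ∀ f : MvPolynomial (Fin 2) ℂ, f.totalDegree ≤ 5 →
        f ∈ ptIdeal p ^ 3 → (∀ i, f ∈ ptIdeal (q i) ^ 2) → f = 0 := by
  refine ⟨(0, 0), ![(1, 0), (0, 1), (1, 1), (2, 1), (1, 2)], ?_⟩
  intro f hdeg h3 h2
  set c : ℕ → ℕ → ℂ := fun a b => coeff (fsm a b) f with hc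
  have hF : f = ∑ p ∈ T5, monomial (fsm p.1 p.2) (c p.1 p.2) := expand f hdeg
  -- memberships for derivatives
  have m2 : ∀ i, pderiv i f ∈ ptIdeal (0, 0) ^ 2 := pderiv_mem_pow 2 f h3
  have m1 : ∀ i j, pderiv i (pderiv j f) ∈ ptIdeal ((0 : ℂ), (0 : ℂ)) := by
    intro i j
    have := pderiv_mem_pow 1 (pderiv j f) (m2 j) i
    rwa [pow_one] at this
  have n1 : ∀ t i, pderiv i f ∈ ptIdeal (![((1:ℂ), (0:ℂ)), (0, 1), (1, 1), (2, 1), (1, 2)] t) := by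
    intro t i
    have := pderiv_mem_pow 1 f (h2 t) i
    rwa [pow_one] at this
  -- the 21 evaluation conditions
  have hp00 := eval_zero_of_mem _ f (Ideal.pow_le_self (by norm_num) h3)
  have hp01 := eval_zero_of_mem _ _ (Ideal.pow_le_self (by norm_num) (m2 1))
  have hp02 := eval_zero_of_mem _ _ (m1 1 1)
  have hp10 := eval_zero_of_mem _ _ (Ideal.pow_le_self (by norm_num) (m2 0))
  have hp11 := eval_zero_of_mem _ _ (m1 0 1)
  have hp20 := eval_zero_of_mem _ _ (m1 0 0)
  have hq100 := eval_zero_of_mem _ f (Ideal.pow_le_self (by norm_num) (h2 0))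
  have hq101 := eval_zero_of_mem _ _ (n1 0 1)
  have hq110 := eval_zero_of_mem _ _ (n1 0 0)
  have hq200 := eval_zero_of_mem _ f (Ideal.pow_le_self (by norm_num) (h2 1))
  have hq201 := eval_zero_of_mem _ _ (n1 1 1)
  have hq210 := eval_zero_of_mem _ _ (n1 1 0)
  have hq300 := eval_zero_of_mem _ f (Ideal.pow_le_self (by norm_num) (h2 2))
  have hq301 := eval_zero_of_mem _ _ (n1 2 1)
  have hq310 := eval_zero_of_mem _ _ (n1 2 0)
  have hq400 := eval_zero_of_mem _ f (Ideal.pow_le_self (by norm_num) (h2 3))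
  have hq401 := eval_zero_of_mem _ _ (n1 3 1)
  have hq410 := eval_zero_of_mem _ _ (n1 3 0)
  have hq500 := eval_zero_of_mem _ f (Ideal.pow_le_self (by norm_num) (h2 4))
  have hq501 := eval_zero_of_mem _ _ (n1 4 1)
  have hq510 := eval_zero_of_mem _ _ (n1 4 0)
  rw [hF] at hp00 hp01 hp02 hp10 hp11 hp20 hq100 hq101 hq110 hq200 hq201 hq210 hq300 hq301 hq310 hq400 hq401 hq410 hq500 hq501 hq510
  simp only [Matrix.cons_val_zero, Matrix.cons_val_one, Matrix.head_cons,
    Matrix.cons_val_two, Matrix.tail_cons, Matrix.cons_val_three, Matrix.cons_val_four,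
    T5, Finset.sum_filter, Finset.sum_product, Finset.sum_range_succ,
    Finset.sum_range_zero, monomial_fsm, map_add, map_mul, map_zero, map_sum,
    pderiv_C_mul, pderiv_mul, pderiv_pow', pderiv_X, map_pow, eval_C, eval_X,
    if_true, if_false, map_ofNat, map_natCast, Nat.cast_ofNat] at hp00 hp01 hp02 hp10 hp11 hp20 hq100 hq101 hq110 hq200 hq201 hq210 hq300 hq301 hq310 hq400 hq401 hq410 hq500 hq501 hq510
  norm_num at hp00 hp01 hp02 hp10 hp11 hp20 hq100 hq101 hq110 hq200 hq201 hq210 hq300 hq301 hq310 hq400 hq401 hq410 hq500 hq501 hq510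
  have hp02' : c 0 2 = 0 := hp02.resolve_right (by simp [cc2])
  have hp20' : c 2 0 = 0 := hp20.resolve_right (by simp [cc2])
  have hc00 : c 0 0 = 0 := by linear_combination (1 : ℂ) * hp00
  have hc01 : c 0 1 = 0 := by linear_combination (1 : ℂ) * hp01
  have hc02 : c 0 2 = 0 := by linear_combination (1 : ℂ) * hp02'
  have hc03 : c 0 3 = 0 := by linear_combination (-4 : ℂ) * hp00 + (-3 : ℂ) * hp01 + (-2 : ℂ) * hp02' + ((3 : ℂ)/4) * hq100 + ((1 : ℂ)/4) * hq101 + (4 : ℂ) * hq200 + (-1 : ℂ) * hq201 + (1 : ℂ) * hq301 + ((-3 : ℂ)/4) * hq500 + ((1 : ℂ)/4) * hq501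
  have hc04 : c 0 4 = 0 := by linear_combination (3 : ℂ) * hp00 + (2 : ℂ) * hp01 + (1 : ℂ) * hp02' + ((-3 : ℂ)/2) * hq100 + ((-1 : ℂ)/2) * hq101 + (-3 : ℂ) * hq200 + (1 : ℂ) * hq201 + (-2 : ℂ) * hq301 + ((3 : ℂ)/2) * hq500 + ((-1 : ℂ)/2) * hq501
  have hc05 : c 0 5 = 0 := by linear_combination ((3 : ℂ)/4) * hq100 + ((1 : ℂ)/4) * hq101 + (1 : ℂ) * hq301 + ((-3 : ℂ)/4) * hq500 + ((1 : ℂ)/4) * hq501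
  have hc10 : c 1 0 = 0 := by linear_combination (1 : ℂ) * hp10
  have hc11 : c 1 1 = 0 := by linear_combination (1 : ℂ) * hp11
  have hc12 : c 1 2 = 0 := by linear_combination ((5 : ℂ)/3) * hp00 + (2 : ℂ) * hp01 + ((1 : ℂ)/3) * hp02' + (-3 : ℂ) * hp10 + ((-4 : ℂ)/3) * hp11 + ((-2 : ℂ)/3) * hp20' + ((1 : ℂ)/4) * hq100 + (-1 : ℂ) * hq101 + (-1 : ℂ) * hq110 + ((-11 : ℂ)/2) * hq200 + ((5 : ℂ)/2) * hq201 + (1 : ℂ) * hq210 + (3 : ℂ) * hq300 + (-1 : ℂ) * hq301 + (-2 : ℂ) * hq310 + ((7 : ℂ)/6) * hq400 + ((-1 : ℂ)/6) * hq401 + ((-1 : ℂ)/3) * hq410 + ((-7 : ℂ)/12) * hq500 + ((1 : ℂ)/6) * hq501 + ((1 : ℂ)/3) * hq510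
  have hc13 : c 1 3 = 0 := by linear_combination ((4 : ℂ)/3) * hp00 + ((2 : ℂ)/3) * hp02' + (2 : ℂ) * hp10 + ((1 : ℂ)/3) * hp11 + ((2 : ℂ)/3) * hp20' + ((5 : ℂ)/2) * hq100 + (2 : ℂ) * hq101 + (1 : ℂ) * hq110 + ((5 : ℂ)/2) * hq200 + ((-3 : ℂ)/2) * hq201 + (-4 : ℂ) * hq300 + (4 : ℂ) * hq301 + (2 : ℂ) * hq310 + ((-7 : ℂ)/6) * hq400 + ((1 : ℂ)/6) * hq401 + ((1 : ℂ)/3) * hq410 + ((-7 : ℂ)/6) * hq500 + ((1 : ℂ)/3) * hq501 + ((-1 : ℂ)/3) * hq510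
  have hc14 : c 1 4 = 0 := by linear_combination (-3 : ℂ) * hp00 + (-2 : ℂ) * hp01 + (-1 : ℂ) * hp02' + ((-11 : ℂ)/4) * hq100 + (-1 : ℂ) * hq101 + (3 : ℂ) * hq200 + (-1 : ℂ) * hq201 + (1 : ℂ) * hq300 + (-3 : ℂ) * hq301 + ((7 : ℂ)/4) * hq500 + ((-1 : ℂ)/2) * hq501
  have hc20 : c 2 0 = 0 := by linear_combination (1 : ℂ) * hp20'
  have hc21 : c 2 1 = 0 := by linear_combination ((5 : ℂ)/3) * hp00 + (-3 : ℂ) * hp01 + ((-2 : ℂ)/3) * hp02' + (2 : ℂ) * hp10 + ((-4 : ℂ)/3) * hp11 + ((1 : ℂ)/3) * hp20' + ((-11 : ℂ)/2) * hq100 + (1 : ℂ) * hq101 + ((5 : ℂ)/2) * hq110 + ((1 : ℂ)/4) * hq200 + (-1 : ℂ) * hq201 + (-1 : ℂ) * hq210 + (3 : ℂ) * hq300 + (-2 : ℂ) * hq301 + (-1 : ℂ) * hq310 + ((-7 : ℂ)/12) * hq400 + ((1 : ℂ)/3) * hq401 + ((1 : ℂ)/6) * hq410 + ((7 : ℂ)/6)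 * hq500 + ((-1 : ℂ)/3) * hq501 + ((-1 : ℂ)/6) * hq510
  have hc22 : c 2 2 = 0 := by linear_combination ((-13 : ℂ)/3) * hp00 + ((-2 : ℂ)/3) * hp02' + ((5 : ℂ)/3) * hp11 + ((-2 : ℂ)/3) * hp20' + ((1 : ℂ)/2) * hq100 + (-2 : ℂ) * hq101 + ((-3 : ℂ)/2) * hq110 + ((1 : ℂ)/2) * hq200 + ((-3 : ℂ)/2) * hq201 + (-2 : ℂ) * hq210 + (1 : ℂ) * hq300 + (-1 : ℂ) * hq301 + (-1 : ℂ) * hq310 + ((7 : ℂ)/6) * hq400 + ((-1 : ℂ)/6) * hq401 + ((-1 : ℂ)/3) * hq410 + ((7 : ℂ)/6) * hq500 + ((-1 : ℂ)/3) * hq501 + ((-1 : ℂ)/6) * hq510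
  have hc23 : c 2 3 = 0 := by linear_combination ((8 : ℂ)/3) * hp00 + (3 : ℂ) * hp01 + ((4 : ℂ)/3) * hp02' + (-2 : ℂ) * hp10 + ((-1 : ℂ)/3) * hp11 + ((-2 : ℂ)/3) * hp20' + (5 : ℂ) * hq100 + (1 : ℂ) * hq101 + (-1 : ℂ) * hq110 + ((-13 : ℂ)/2) * hq200 + ((5 : ℂ)/2) * hq201 + (3 : ℂ) * hq301 + (-2 : ℂ) * hq310 + ((7 : ℂ)/6) * hq400 + ((-1 : ℂ)/6) * hq401 + ((-1 : ℂ)/3) * hq410 + ((-7 : ℂ)/3) * hq500 + ((2 : ℂ)/3) * hq501 + ((1 : ℂ)/3) * hq510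
  have hc30 : c 3 0 = 0 := by linear_combination (-4 : ℂ) * hp00 + (-3 : ℂ) * hp10 + (-2 : ℂ) * hp20' + (4 : ℂ) * hq100 + (-1 : ℂ) * hq110 + ((3 : ℂ)/4) * hq200 + ((1 : ℂ)/4) * hq210 + (1 : ℂ) * hq310 + ((-3 : ℂ)/4) * hq400 + ((1 : ℂ)/4) * hq410
  have hc31 : c 3 1 = 0 := by linear_combination ((4 : ℂ)/3) * hp00 + (2 : ℂ) * hp01 + ((2 : ℂ)/3) * hp02' + ((1 : ℂ)/3) * hp11 + ((2 : ℂ)/3) * hp20' + ((5 : ℂ)/2) * hq100 + ((-3 : ℂ)/2) * hq110 + ((5 : ℂ)/2) * hq200 + (1 : ℂ) * hq201 + (2 : ℂ) * hq210 + (-4 : ℂ) * hq300 + (2 : ℂ) * hq301 + (4 : ℂ) * hq310 + ((-7 : ℂ)/6) * hq400 + ((-1 : ℂ)/3) * hq401 + ((1 : ℂ)/3) * hq410 + ((-7 : ℂ)/6) * hq500 + ((1 : ℂ)/3) * hq501 + ((1 : ℂ)/6) * hq510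
  have hc32 : c 3 2 = 0 := by linear_combination ((8 : ℂ)/3) * hp00 + (-2 : ℂ) * hp01 + ((-2 : ℂ)/3) * hp02' + (3 : ℂ) * hp10 + ((-1 : ℂ)/3) * hp11 + ((4 : ℂ)/3) * hp20' + ((-13 : ℂ)/2) * hq100 + ((5 : ℂ)/2) * hq110 + (5 : ℂ) * hq200 + (-1 : ℂ) * hq201 + (1 : ℂ) * hq210 + (-2 : ℂ) * hq301 + (3 : ℂ) * hq310 + ((-7 : ℂ)/3) * hq400 + ((1 : ℂ)/3) * hq401 + ((2 : ℂ)/3) * hq410 + ((7 : ℂ)/6) * hq500 + ((-1 : ℂ)/3) * hq501 + ((-1 : ℂ)/6) * hq510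
  have hc40 : c 4 0 = 0 := by linear_combination (3 : ℂ) * hp00 + (2 : ℂ) * hp10 + (1 : ℂ) * hp20' + (-3 : ℂ) * hq100 + (1 : ℂ) * hq110 + ((-3 : ℂ)/2) * hq200 + ((-1 : ℂ)/2) * hq210 + (-2 : ℂ) * hq310 + ((3 : ℂ)/2) * hq400 + ((-1 : ℂ)/2) * hq410
  have hc41 : c 4 1 = 0 := by linear_combination (-3 : ℂ) * hp00 + (-2 : ℂ) * hp10 + (-1 : ℂ) * hp20' + (3 : ℂ) * hq100 + (-1 : ℂ) * hq110 + ((-11 : ℂ)/4) * hq200 + (-1 : ℂ) * hq210 + (1 : ℂ) * hq300 + (-3 : ℂ) * hq310 + ((7 : ℂ)/4) * hq400 + ((-1 : ℂ)/2) * hq410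
  have hc50 : c 5 0 = 0 := by linear_combination ((3 : ℂ)/4) * hq200 + ((1 : ℂ)/4) * hq210 + (1 : ℂ) * hq310 + ((-3 : ℂ)/4) * hq400 + ((1 : ℂ)/4) * hq410
  rw [hF]
  refine Finset.sum_eq_zero (fun p hp => ?_)
  fin_cases hp <;>
    simp only [hc00, hc01, hc02, hc03, hc04, hc05, hc10, hc11, hc12, hc13, hc14,
      hc20, hc21, hc22, hc23, hc30, hc31, hc32, hc40, hc41, hc50, map_zero]
end
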